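/- Let (Ω, P) be a probability space and let X₀, X₁, X₂, … : Ω → ℝ be independent and identically distributed real random variables with E[Xᵢ] = 0 and E[Xᵢ²] = 1. Let γ : ℕ → ℕ → ℝ be a triangular array of fixed weights with Γₙ := √(∑_{i=0}^{n−1} γ(n,i)²) > 0 for all n, and suppose (max_{0 ≤ i < n} |γ(n,i)|) / Γₙ → 0 as n → ∞. Then the triangular array Q(n,i) := (γ(n,i) / Γₙ) · Xᵢ satisfies the Lindeberg condition: for every ε > 0, ∑_{i=0}^{n−1} E[ Q(n,i)² · 1{|Q(n,i)| > ε} ] → 0 as n → ∞; equivalently, Γₙ⁻² · ∑_{i=0}^{n−1} E[ γ(n,i)² Xᵢ² · 1{|γ(n,i) Xᵢ| > ε Γₙ} ] → 0. -/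

import Mathlib

open MeasureTheory ProbabilityTheory Filter Topology

/-!
Write `tailSq c x = x² · 1{c < |x|}`. If `|a| ≤ δ`, then `|a x| > ε` forces `|x| > ε / δ`, so
`tailSq ε (a x) ≤ a² · tailSq (ε / δ) x`. Summing over `i < n` with weights `a = γ n i / Γ n`,
whose squares add up to at most `1`, and using that the `X i` share the law of `X 0`, the
Lindeberg sum is at most `E[tailSq (ε / δ) (X 0)]` as soon as all weights are below `δ`. By dominated convergence
this tail of the second moment of `X 0` tends to `0` as `δ → 0⁺`.
-/

noncomputable section

def tailSq (c x : ℝ) : ℝ :=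
  x ^ 2 * Set.indicator {y : ℝ | c < |y|} (fun _ => 1) x

lemma measurable_tailSq (c : ℝ) : Measurable (tailSq c) :=
  (measurable_id.pow_const 2).mul
    (measurable_const.indicator (measurableSet_lt measurable_const measurable_abs))

lemma tailSq_nonneg (c x : ℝ) : 0 ≤ tailSq c x :=
  mul_nonneg (sq_nonneg x) (Set.indicator_nonneg (fun _ _ => zero_le_one) x)

lemma tailSq_le_sq (c x : ℝ) : tailSq c x ≤ x ^ 2 :=
  mul_le_of_le_one_right (sq_nonneg x)
    (Set.indicator_le_self' (fun _ _ => zero_le_one) x)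

lemma tailSq_eq_zero_of_abs_le {c x : ℝ} (h : |x| ≤ c) : tailSq c x = 0 := by
  simp [tailSq, Set.indicator_of_notMem (show x ∉ {y : ℝ | c < |y|} from not_lt.2 h)]

lemma tailSq_mul_le {a δ : ℝ} (hδ : 0 < δ) (ha : |a| ≤ δ) (ε x : ℝ) :
    tailSq ε (a * x) ≤ a ^ 2 * tailSq (ε / δ) x := by
  by_cases hax : ε < |a * x|
  · have hx : ε / δ < |x| := by
      rw [div_lt_iff₀ hδ]
      calc ε < |a| * |x| := by rwa [← abs_mul]
        _ ≤ δ * |x| := by gcongr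
        _ = |x| * δ := mul_comm _ _
    simp only [tailSq, Set.indicator_of_mem (show a * x ∈ {y : ℝ | ε < |y|} from hax),
      Set.indicator_of_mem (show x ∈ {y : ℝ | ε / δ < |y|} from hx)]
    exact le_of_eq (by ring)
  · rw [tailSq_eq_zero_of_abs_le (not_lt.1 hax)]
    exact mul_nonneg (sq_nonneg a) (tailSq_nonneg _ _)

lemma sum_sq_div_sqrt_sum_sq_le_one {ι : Type*} (s : Finset ι) (f : ι → ℝ) :
    ∑ i ∈ s, (f i / √(∑ j ∈ s, f j ^ 2)) ^ 2 ≤ 1 := by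
  simp only [div_pow, ← Finset.sum_div,
    Real.sq_sqrt (Finset.sum_nonneg fun j _ => sq_nonneg (f j))]
  exact div_self_le_one _

section

variable {Ω : Type*} [MeasurableSpace Ω] {μ : Measure Ω}

lemma MeasureTheory.MemLp.integrable_tailSq_comp {X : Ω → ℝ} (hX : MemLp X 2 μ) (c : ℝ) :
    Integrable (fun ω => tailSq c (X ω)) μ :=
  hX.integrable_sq.mono'
    ((measurable_tailSq c).comp_aemeasurable hX.aemeasurable).aestronglyMeasurable
    (Eventually.of_forall fun ω => by
      rw [Real.norm_eq_abs, abs_of_nonneg (tailSq_nonneg _ _)]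
      exact tailSq_le_sq _ _)

lemma tendsto_integral_tailSq_atTop {X : Ω → ℝ} (hX : MemLp X 2 μ) :
    Tendsto (fun c => ∫ ω, tailSq c (X ω) ∂μ) atTop (𝓝 0) := by
  simpa using tendsto_integral_filter_of_dominated_convergence (fun ω => X ω ^ 2)
    (Eventually.of_forall fun c => (hX.integrable_tailSq_comp c).aestronglyMeasurable)
    (Eventually.of_forall fun c => Eventually.of_forall fun ω => by
      rw [Real.norm_eq_abs, abs_of_nonneg (tailSq_nonneg _ _)]
      exact tailSq_le_sq _ _)
    hX.integrable_sq
    (Eventually.of_forall fun ω => tendsto_const_nhds.congr'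
      ((eventually_ge_atTop |X ω|).mono fun c hc => (tailSq_eq_zero_of_abs_le hc).symm))

lemma integral_tailSq_mul_le {X : Ω → ℝ} (hX : MemLp X 2 μ) {a δ : ℝ} (hδ : 0 < δ)
    (ha : |a| ≤ δ) (ε : ℝ) :
    ∫ ω, tailSq ε (a * X ω) ∂μ ≤ a ^ 2 * ∫ ω, tailSq (ε / δ) (X ω) ∂μ := by
  rw [← integral_const_mul]
  exact integral_mono_of_nonneg (Eventually.of_forall fun ω => tailSq_nonneg _ _)
    ((hX.integrable_tailSq_comp _).const_mul _)
    (Eventually.of_forall fun ω => tailSq_mul_le hδ ha ε (X ω))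

theorem tendsto_sum_integral_tailSq_of_identDistrib {X : ℕ → Ω → ℝ}
    (hident : ∀ i, IdentDistrib (X i) (X 0) μ μ) (hX : MemLp (X 0) 2 μ) {a : ℕ → ℕ → ℝ}
    (hsum : ∀ n, ∑ i ∈ Finset.range n, a n i ^ 2 ≤ 1)
    (hmax : ∀ δ > (0 : ℝ), ∀ᶠ n in atTop, ∀ i < n, |a n i| ≤ δ) {ε : ℝ} (hε : 0 < ε) :
    Tendsto (fun n => ∑ i ∈ Finset.range n, ∫ ω, tailSq ε (a n i * X i ω) ∂μ)
      atTop (𝓝 0) := by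
  set F : ℝ → ℝ := fun c => ∫ ω, tailSq c (X 0 ω) ∂μ
  have hF_nonneg : ∀ c, 0 ≤ F c := fun c => integral_nonneg fun ω => tailSq_nonneg _ _
  have hsum_le : ∀ δ > (0 : ℝ), ∀ᶠ n in atTop,
      ∑ i ∈ Finset.range n, ∫ ω, tailSq ε (a n i * X i ω) ∂μ ≤ F (ε / δ) := by
    intro δ hδ
    filter_upwards [hmax δ hδ] with n hn
    calc ∑ i ∈ Finset.range n, ∫ ω, tailSq ε (a n i * X i ω) ∂μ
        ≤ ∑ i ∈ Finset.range n, a n i ^ 2 * F (ε / δ) := by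
          refine Finset.sum_le_sum fun i hi => ?_
          have hlaw : ∫ ω, tailSq (ε / δ) (X i ω) ∂μ = F (ε / δ) :=
            ((hident i).comp (measurable_tailSq (ε / δ))).integral_eq
          rw [← hlaw]
          exact integral_tailSq_mul_le ((hident i).symm.memLp_snd hX) hδ
            (hn i (Finset.mem_range.1 hi)) ε
      _ = (∑ i ∈ Finset.range n, a n i ^ 2) * F (ε / δ) := (Finset.sum_mul ..).symm
      _ ≤ F (ε / δ) := mul_le_of_le_one_left (hF_nonneg _) (hsum n)
  have hF_small : Tendsto (fun δ => F (ε / δ)) (𝓝[>] 0) (𝓝 0) :=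
    (tendsto_integral_tailSq_atTop hX).comp (tendsto_inv_nhdsGT_zero.const_mul_atTop hε)
  refine tendsto_order.2 ⟨fun b hb => Eventually.of_forall fun n =>
    hb.trans_le (Finset.sum_nonneg fun i _ => integral_nonneg fun ω => tailSq_nonneg _ _),
    fun η hη => ?_⟩
  obtain ⟨δ, hδη, hδ⟩ := ((hF_small.eventually (gt_mem_nhds hη)).and self_mem_nhdsWithin).exists
  exact (hsum_le δ hδ).mono fun n hn => hn.trans_lt hδη

end

end

theorem lindeberg_condition_weighted_array_general
    {Ω : Type*} [MeasurableSpace Ω] (P : Measure Ω)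
    (X : ℕ → Ω → ℝ)
    (hident : ∀ i, IdentDistrib (X i) (X 0) P P)
    (hL2 : ∀ i, MemLp (X i) 2 P)
    (γ : ℕ → ℕ → ℝ)
    (Γ : ℕ → ℝ)
    (hΓ : ∀ n, Γ n = Real.sqrt (∑ i ∈ Finset.range n, (γ n i) ^ 2))
    (hmax : ∀ ε > (0 : ℝ), ∀ᶠ n in atTop, ∀ i < n, |γ n i| < ε * Γ n)
    (Q : ℕ → ℕ → Ω → ℝ)
    (hQ : ∀ n i ω, Q n i ω = (γ n i / Γ n) * X i ω) :
    ∀ ε > (0 : ℝ),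
      Tendsto
        (fun n => ∑ i ∈ Finset.range n,
          ∫ ω, (Q n i ω) ^ 2 * Set.indicator {ω' | ε < |Q n i ω'|} (fun _ => (1 : ℝ)) ω ∂P)
        atTop (nhds 0) := by
  intro ε hε
  obtain rfl : Q = fun n i ω => (γ n i / Γ n) * X i ω := funext₃ hQ
  have hΓ_nonneg : ∀ n, 0 ≤ Γ n := fun n => (hΓ n).symm ▸ Real.sqrt_nonneg _
  have hweights : ∀ δ > (0 : ℝ), ∀ᶠ n in atTop, ∀ i < n, |γ n i / Γ n| ≤ δ := fun δ hδ =>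
    (hmax δ hδ).mono fun n hn i hi => by
      rw [abs_div, abs_of_nonneg (hΓ_nonneg n)]
      exact div_le_of_le_mul₀ (hΓ_nonneg n) hδ.le (hn i hi).le
  exact tendsto_sum_integral_tailSq_of_identDistrib hident (hL2 0)
    (fun n => hΓ n ▸ sum_sq_div_sqrt_sum_sq_le_one _ _) hweights hε

/-- **Lindeberg condition for the weighted dummy array.**
For i.i.d. standardized random variables `X i` and a triangular array of fixed weights `γ`
with `Γ n = √(∑_{i<n} γ n i ^ 2) > 0` and `(max_{i<n} |γ n i|)/Γ n → 0`, the array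
`Q n i := (γ n i / Γ n) * X i` satisfies the Lindeberg condition: for every `ε > 0`,
`∑_{i<n} E[(Q n i)² · 1{|Q n i| > ε}] → 0` as `n → ∞`. -/
theorem lindeberg_condition_weighted_array
    {Ω : Type*} [MeasurableSpace Ω] (P : Measure Ω) [IsProbabilityMeasure P]
    (X : ℕ → Ω → ℝ)
    (hmeas : ∀ i, Measurable (X i))
    (hindep : iIndepFun X P)
    (hident : ∀ i, IdentDistrib (X i) (X 0) P P)
    (hL2 : ∀ i, MemLp (X i) 2 P)
    (hmean : ∀ i, ∫ ω, X i ω ∂P = 0)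
    (hvar : ∀ i, ∫ ω, (X i ω) ^ 2 ∂P = 1)
    (γ : ℕ → ℕ → ℝ)
    (Γ : ℕ → ℝ)
    (hΓ : ∀ n, Γ n = Real.sqrt (∑ i ∈ Finset.range n, (γ n i) ^ 2))
    (hΓpos : ∀ n, 1 ≤ n → 0 < Γ n)
    (hmax : ∀ ε > (0 : ℝ), ∀ᶠ n in atTop, ∀ i < n, |γ n i| < ε * Γ n)
    (Q : ℕ → ℕ → Ω → ℝ)
    (hQ : ∀ n i ω, Q n i ω = (γ n i / Γ n) * X i ω) :
    ∀ ε > (0 : ℝ),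
      Tendsto
        (fun n => ∑ i ∈ Finset.range n,
          ∫ ω, (Q n i ω) ^ 2 * Set.indicator {ω' | ε < |Q n i ω'|} (fun _ => (1 : ℝ)) ω ∂P)
        atTop (nhds 0) :=
  lindeberg_condition_weighted_array_general P X hident hL2 γ Γ hΓ hmax Q hQ
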